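/- arXiv:1712.02027 — 6 statements merged into one kernel-verified Lean document; each statement's English description precedes it below -/
import Mathlib

section
/- (Theorem 1) Rest points of the two-pool replicator dynamics: let x̂ := (a − b)/(Np(ω₁ − ω₂)²) − ω₂/(ω₁ − ω₂) and assume 0 < x̂ < 1. Then for x ∈ [0,1], the replicator vector field vanishes, f(x) = 0, if and only if x ∈ {0, 1, x̂}; equivalently, the rest points are exactly the population states (0,1), (1,0) and (x̂, 1 − x̂). -/
/-!
For two strategies the replicator field factors as `x (1 - x) (y₁ - y₂)`. Since both payoffs
share the denominator `N (ω₁ x + ω₂ (1 - x))`, which is positive on the simplex, the payoff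
difference is `p (ω₁ - ω₂)² (x̂ - x) / (ω₁ x + ω₂ (1 - x))`; so the rest points are `0`, `1`
and `x̂`.
-/

theorem replicator_two_strategies_eq (x u v : ℝ) :
    x * (u - (x * u + (1 - x) * v)) = x * (1 - x) * (u - v) := by
  ring

theorem mul_add_mul_one_sub_pos {ω₁ ω₂ x : ℝ} (hω₁ : 0 < ω₁) (hω₂ : 0 < ω₂) (hx : x ∈ Set.Icc (0 : ℝ) 1) :
    0 < ω₁ * x + ω₂ * (1 - x) := by
  obtain ⟨hx0, hx1⟩ := hx
  rcases hx0.eq_or_lt with rfl | hx0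
  · simpa using hω₂
  · nlinarith [mul_nonneg hω₂.le (sub_nonneg.mpr hx1)]

theorem payoff_sub_payoff_eq {N p ω₁ ω₂ a b x : ℝ} (hN : N ≠ 0) (hp : p ≠ 0) (hω : ω₁ ≠ ω₂)
    (hw : ω₁ * x + ω₂ * (1 - x) ≠ 0) :
    a / (N * (ω₁ * x + ω₂ * (1 - x))) - p * ω₁ - (b / (N * (ω₁ * x + ω₂ * (1 - x))) - p * ω₂)
      = p * (ω₁ - ω₂) ^ 2 * ((a - b) / (N * p * (ω₁ - ω₂) ^ 2) - ω₂ / (ω₁ - ω₂) - x)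
        / (ω₁ * x + ω₂ * (1 - x)) := by
  have hd : ω₁ - ω₂ ≠ 0 := sub_ne_zero.mpr hω
  field_simp
  ring

theorem two_pool_rest_points_general (N p ω₁ ω₂ a b : ℝ)
    (hN : 0 < N) (hp : 0 < p) (hω₁ : 0 < ω₁) (hω₂ : 0 < ω₂)
    (hω : ω₁ ≠ ω₂)
    (xstar : ℝ) (hxstar : xstar = (a - b) / (N * p * (ω₁ - ω₂) ^ 2) - ω₂ / (ω₁ - ω₂)) :
    let y₁ : ℝ → ℝ → ℝ := fun x₁ x₂ => a / (N * (ω₁ * x₁ + ω₂ * x₂)) - p * ω₁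
    let y₂ : ℝ → ℝ → ℝ := fun x₁ x₂ => b / (N * (ω₁ * x₁ + ω₂ * x₂)) - p * ω₂
    let f₁ : ℝ → ℝ → ℝ := fun x₁ x₂ =>
      x₁ * (y₁ x₁ x₂ - (x₁ * y₁ x₁ x₂ + x₂ * y₂ x₁ x₂))
    ∀ x ∈ Set.Icc (0 : ℝ) 1,
      (f₁ x (1 - x) = 0 ↔ x = 0 ∨ x = 1 ∨ x = xstar) := by
  intro y₁ y₂ f₁ x hx
  have hw := mul_add_mul_one_sub_pos hω₁ hω₂ hx
  have hpayoff : y₁ x (1 - x) - y₂ x (1 - x)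
      = p * (ω₁ - ω₂) ^ 2 * (xstar - x) / (ω₁ * x + ω₂ * (1 - x)) := by
    rw [hxstar]
    exact payoff_sub_payoff_eq hN.ne' hp.ne' hω hw.ne'
  have hcoef : p * (ω₁ - ω₂) ^ 2 ≠ 0 := by
    have := sub_ne_zero.mpr hω
    positivity
  change x * (y₁ x (1 - x) - _) = 0 ↔ _
  rw [replicator_two_strategies_eq, hpayoff]
  simp only [mul_eq_zero, div_eq_zero_iff, hcoef, hw.ne', sub_eq_zero, false_or, or_false,
    or_assoc, eq_comm (a := (1 : ℝ)), eq_comm (a := xstar)]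

/-- (Theorem 1) Rest points of the two-pool replicator dynamics: with
`xstar = (a-b)/(Np(ω₁-ω₂)²) - ω₂/(ω₁-ω₂)` and `0 < xstar < 1`, for `x ∈ [0,1]`
the replicator vector field `f(x) = f₁(x, 1-x)` vanishes if and only if
`x ∈ {0, 1, xstar}`. -/
theorem two_pool_rest_points (N p ω₁ ω₂ a b : ℝ)
    (hN : 0 < N) (hp : 0 < p) (hω₁ : 0 < ω₁) (hω₂ : 0 < ω₂)
    (ha : 0 < a) (hb : 0 < b) (hω : ω₁ ≠ ω₂)
    (xstar : ℝ) (hxstar : xstar = (a - b) / (N * p * (ω₁ - ω₂) ^ 2) - ω₂ / (ω₁ - ω₂))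
    (hxstar0 : 0 < xstar) (hxstar1 : xstar < 1) :
    let y₁ : ℝ → ℝ → ℝ := fun x₁ x₂ => a / (N * (ω₁ * x₁ + ω₂ * x₂)) - p * ω₁
    let y₂ : ℝ → ℝ → ℝ := fun x₁ x₂ => b / (N * (ω₁ * x₁ + ω₂ * x₂)) - p * ω₂
    let f₁ : ℝ → ℝ → ℝ := fun x₁ x₂ =>
      x₁ * (y₁ x₁ x₂ - (x₁ * y₁ x₁ x₂ + x₂ * y₂ x₁ x₂))
    ∀ x ∈ Set.Icc (0 : ℝ) 1,
      (f₁ x (1 - x) = 0 ↔ x = 0 ∨ x = 1 ∨ x = xstar) :=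
  two_pool_rest_points_general N p ω₁ ω₂ a b hN hp hω₁ hω₂ hω xstar hxstar
end

section
/- Jacobian of the replicator dynamics at the boundary rest point (0,1): the Jacobian matrix J of (f₁,f₂) with respect to (x₁,x₂), evaluated at (x₁,x₂) = (0,1), satisfies J₁₂ = 0, J₁₁ = (a − b)/(Nω₂) − p(ω₁ − ω₂), and J₂₂ = pω₂ − b/(Nω₂); consequently det J(0,1) = ((a − b)/(Nω₂) − p(ω₁ − ω₂)) · (pω₂ − b/(Nω₂)). -/
/-!
Both diagonal entries come from the product rule with a factor vanishing at `(0,1)`.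
Since `f₁ = x₁ (y₁ - ȳ)`, we get `∂₁f₁(0,1) = (y₁ - ȳ)(0,1) = y₁(0,1) - y₂(0,1)`. On the edge
`x₁ = 0` we have `ȳ = x₂ y₂`, so `f₁` vanishes there (whence `J₁₂ = 0`) and
`f₂(0,x₂) = (1 - x₂) · x₂ y₂(0,x₂)`, whence `∂₂f₂(0,1) = -y₂(0,1)`. The Jacobian is thus
triangular and its determinant is `J₁₁ J₂₂`.
-/

theorem HasDerivAt.fun_mul_of_eq_zero {𝕜 𝔸 : Type*} [NontriviallyNormedField 𝕜] [NormedRing 𝔸]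
    [NormedAlgebra 𝕜 𝔸] {u g : 𝕜 → 𝔸} {u' : 𝔸} {x : 𝕜} (hu : HasDerivAt u u' x)
    (hux : u x = 0) (hg : DifferentiableAt 𝕜 g x) :
    HasDerivAt (fun t => u t * g t) (u' * g x) x := by
  simpa [hux] using hu.fun_mul hg.hasDerivAt

theorem jacobian_at_boundary_rest_point_general (N p ω₁ ω₂ a b : ℝ)
    (hN : 0 < N) (hω₂ : 0 < ω₂) :
    let y₁ : ℝ → ℝ → ℝ := fun x₁ x₂ => a / (N * (ω₁ * x₁ + ω₂ * x₂)) - p * ω₁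
    let y₂ : ℝ → ℝ → ℝ := fun x₁ x₂ => b / (N * (ω₁ * x₁ + ω₂ * x₂)) - p * ω₂
    let f₁ : ℝ → ℝ → ℝ := fun x₁ x₂ =>
      x₁ * (y₁ x₁ x₂ - (x₁ * y₁ x₁ x₂ + x₂ * y₂ x₁ x₂))
    let f₂ : ℝ → ℝ → ℝ := fun x₁ x₂ =>
      x₂ * (y₂ x₁ x₂ - (x₁ * y₁ x₁ x₂ + x₂ * y₂ x₁ x₂))
    let J₁₁ : ℝ := deriv (fun t => f₁ t 1) 0
    let J₁₂ : ℝ := deriv (fun t => f₁ 0 t) 1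
    let J₂₁ : ℝ := deriv (fun t => f₂ t 1) 0
    let J₂₂ : ℝ := deriv (fun t => f₂ 0 t) 1
    J₁₂ = 0 ∧
    J₁₁ = (a - b) / (N * ω₂) - p * (ω₁ - ω₂) ∧
    J₂₂ = p * ω₂ - b / (N * ω₂) ∧
    J₁₁ * J₂₂ - J₁₂ * J₂₁
      = ((a - b) / (N * ω₂) - p * (ω₁ - ω₂)) * (p * ω₂ - b / (N * ω₂)) := by
  intro y₁ y₂ f₁ f₂ J₁₁ J₁₂ J₂₁ J₂₂
  have hN₀ := hN.ne'
  have hω₂₀ := hω₂.ne'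
  have hden : N * (ω₁ * 0 + ω₂ * 1) ≠ 0 := by simpa using ⟨hN₀, hω₂₀⟩
  have h₁₂ : J₁₂ = 0 := by simp [J₁₂, f₁]
  have h₁₁ : J₁₁ = (a - b) / (N * ω₂) - p * (ω₁ - ω₂) := by
    have hg : DifferentiableAt ℝ (fun t => y₁ t 1 - (t * y₁ t 1 + 1 * y₂ t 1)) 0 := by
      fun_prop (disch := exact hden)
    rw [show J₁₁ = _ from ((hasDerivAt_id (0 : ℝ)).fun_mul_of_eq_zero rfl hg).deriv]
    simp only [y₁, y₂, mul_zero, zero_add, mul_one, one_mul, zero_mul]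
    field_simp
    ring
  have h₂₂ : J₂₂ = p * ω₂ - b / (N * ω₂) := by
    have hf₂ : (fun t => f₂ 0 t) = fun t => (1 - t) * (t * y₂ 0 t) := by
      funext t
      simp only [f₂]
      ring
    have hg : DifferentiableAt ℝ (fun t => t * y₂ 0 t) 1 := by
      fun_prop (disch := exact hden)
    have hu : HasDerivAt (fun t : ℝ => 1 - t) (-1) 1 := by
      simpa using (hasDerivAt_id (1 : ℝ)).const_sub 1
    rw [show J₂₂ = _ from hf₂ ▸ (hu.fun_mul_of_eq_zero (sub_self 1) hg).deriv]
    simp only [y₂, mul_zero, zero_add, mul_one, one_mul]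
    field_simp
    ring
  exact ⟨h₁₂, h₁₁, h₂₂, by rw [h₁₁, h₁₂, h₂₂]; ring⟩

/-- Jacobian of the two-pool replicator dynamics at the boundary rest point `(0,1)`:
the Jacobian matrix `J` of `(f₁, f₂)` with respect to `(x₁, x₂)` evaluated at
`(x₁,x₂) = (0,1)` satisfies `J₁₂ = 0`, `J₁₁ = (a-b)/(Nω₂) - p(ω₁-ω₂)`,
`J₂₂ = pω₂ - b/(Nω₂)`, and consequently
`det J(0,1) = ((a-b)/(Nω₂) - p(ω₁-ω₂)) * (pω₂ - b/(Nω₂))`. -/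
theorem jacobian_at_boundary_rest_point (N p ω₁ ω₂ a b : ℝ)
    (hN : 0 < N) (hp : 0 < p) (hω₁ : 0 < ω₁) (hω₂ : 0 < ω₂)
    (ha : 0 < a) (hb : 0 < b) (hω : ω₁ ≠ ω₂) :
    let y₁ : ℝ → ℝ → ℝ := fun x₁ x₂ => a / (N * (ω₁ * x₁ + ω₂ * x₂)) - p * ω₁
    let y₂ : ℝ → ℝ → ℝ := fun x₁ x₂ => b / (N * (ω₁ * x₁ + ω₂ * x₂)) - p * ω₂
    let f₁ : ℝ → ℝ → ℝ := fun x₁ x₂ =>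
      x₁ * (y₁ x₁ x₂ - (x₁ * y₁ x₁ x₂ + x₂ * y₂ x₁ x₂))
    let f₂ : ℝ → ℝ → ℝ := fun x₁ x₂ =>
      x₂ * (y₂ x₁ x₂ - (x₁ * y₁ x₁ x₂ + x₂ * y₂ x₁ x₂))
    let J₁₁ : ℝ := deriv (fun t => f₁ t 1) 0
    let J₁₂ : ℝ := deriv (fun t => f₁ 0 t) 1
    let J₂₁ : ℝ := deriv (fun t => f₂ t 1) 0
    let J₂₂ : ℝ := deriv (fun t => f₂ 0 t) 1
    J₁₂ = 0 ∧
    J₁₁ = (a - b) / (N * ω₂) - p * (ω₁ - ω₂) ∧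
    J₂₂ = p * ω₂ - b / (N * ω₂) ∧
    J₁₁ * J₂₂ - J₁₂ * J₂₁
      = ((a - b) / (N * ω₂) - p * (ω₁ - ω₂)) * (p * ω₂ - b / (N * ω₂)) :=
  jacobian_at_boundary_rest_point_general N p ω₁ ω₂ a b hN hω₂
end

section
/- (Lemma 1, part 1) Stability criterion at the boundary rest point (0,1): if (a − b)/(Nω₂) − p(ω₁ − ω₂) < 0 and ((a − b)/(Nω₂) − p(ω₁ − ω₂)) · (pω₂ − b/(Nω₂)) > 0, then both eigenvalues of the Jacobian J(0,1) are real and strictly negative (indeed J(0,1) is triangular and both of its diagonal entries (a − b)/(Nω₂) − p(ω₁ − ω₂) and pω₂ − b/(Nω₂) are strictly negative). -/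
/-!
Along `x₁ = 0` the component `f₁` vanishes identically, so `J(0,1)` is lower triangular and its
eigenvalues are its diagonal entries. Each diagonal entry is the derivative of a product `u * v`
at a zero of `u`, hence equals `u' * v`: this gives `J₁₁ = y₁(0,1) - y₂(0,1)` and
`J₂₂ = -y₂(0,1)`, and the hypotheses make both negative.
-/

theorem HasDerivAt.mul_of_left_eq_zero {𝕜 𝔸 : Type*} [NontriviallyNormedField 𝕜] [NormedRing 𝔸]
    [NormedAlgebra 𝕜 𝔸] {u v : 𝕜 → 𝔸} {u' : 𝔸} {x : 𝕜} (hu : HasDerivAt u u' x)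
    (hv : DifferentiableAt 𝕜 v x) (hux : u x = 0) :
    HasDerivAt (fun t => u t * v t) (u' * v x) x := by
  simpa [hux] using hu.fun_mul hv.hasDerivAt

theorem Matrix.exists_eq_diag_of_isRoot_charpoly {R n : Type*} [CommRing R] [IsDomain R]
    [Fintype n] [DecidableEq n] [LinearOrder n] {M : Matrix n n R} (hM : M.IsLowerTriangular)
    {μ : R} (hμ : M.charpoly.IsRoot μ) : ∃ i, μ = M i i := by
  have hprod : M.charpoly = ∏ i, (Polynomial.X - Polynomial.C (M i i)) := by
    simp [charpoly, det_of_isLowerTriangular _ hM.charmatrix]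
  rw [hprod, Polynomial.IsRoot, Polynomial.eval_prod, Finset.prod_eq_zero_iff] at hμ
  obtain ⟨i, -, hi⟩ := hμ
  exact ⟨i, by simpa [sub_eq_zero] using hi⟩

theorem Matrix.isLowerTriangular_of_fin_two {R : Type*} [Zero R] {M : Matrix (Fin 2) (Fin 2) R}
    (h : M 0 1 = 0) : M.IsLowerTriangular := by
  intro i j hij
  rw [OrderDual.toDual_lt_toDual] at hij
  fin_cases i <;> fin_cases j <;> simp_all

theorem boundary_rest_point_stability_criterion_general (N p ω₁ ω₂ a b : ℝ)
    (hN : 0 < N) (hω₂ : 0 < ω₂)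
    (h1 : (a - b) / (N * ω₂) - p * (ω₁ - ω₂) < 0)
    (h2 : ((a - b) / (N * ω₂) - p * (ω₁ - ω₂)) * (p * ω₂ - b / (N * ω₂)) > 0) :
    let y₁ : ℝ → ℝ → ℝ := fun x₁ x₂ => a / (N * (ω₁ * x₁ + ω₂ * x₂)) - p * ω₁
    let y₂ : ℝ → ℝ → ℝ := fun x₁ x₂ => b / (N * (ω₁ * x₁ + ω₂ * x₂)) - p * ω₂
    let f₁ : ℝ → ℝ → ℝ := fun x₁ x₂ =>
      x₁ * (y₁ x₁ x₂ - (x₁ * y₁ x₁ x₂ + x₂ * y₂ x₁ x₂))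
    let f₂ : ℝ → ℝ → ℝ := fun x₁ x₂ =>
      x₂ * (y₂ x₁ x₂ - (x₁ * y₁ x₁ x₂ + x₂ * y₂ x₁ x₂))
    let J : Matrix (Fin 2) (Fin 2) ℝ :=
      !![deriv (fun t => f₁ t 1) 0, deriv (fun t => f₁ 0 t) 1;
         deriv (fun t => f₂ t 1) 0, deriv (fun t => f₂ 0 t) 1]
    J 0 1 = 0 ∧ J 0 0 < 0 ∧ J 1 1 < 0 ∧
    (∀ μ : ℂ, (J.map (Complex.ofReal)).charpoly.IsRoot μ →
      ∃ r : ℝ, r < 0 ∧ μ = (r : ℂ)) := by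
  intro y₁ y₂ f₁ f₂ J
  have hNω₂ : N * ω₂ ≠ 0 := (mul_pos hN hω₂).ne'
  have hJ01 : J 0 1 = 0 := by simp [J, f₁]
  have hJ00 : J 0 0 = (a - b) / (N * ω₂) - p * (ω₁ - ω₂) := by
    refine ((hasDerivAt_id' (0 : ℝ)).mul_of_left_eq_zero ?_ rfl).deriv.trans ?_
    · fun_prop (disch := simpa using hNω₂)
    · simp [y₁, y₂]
      ring
  have hJ11 : J 1 1 = p * ω₂ - b / (N * ω₂) := by
    have hf₂ : (fun t => f₂ 0 t) = fun t => t * (1 - t) * y₂ 0 t := by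
      funext t
      simp only [f₂]
      ring
    have hu : HasDerivAt (fun t : ℝ => t * (1 - t)) (-1) 1 := by
      simpa using (hasDerivAt_id' (1 : ℝ)).fun_mul
        ((hasDerivAt_const (1 : ℝ) (1 : ℝ)).fun_sub (hasDerivAt_id' 1))
    have hy₂ : DifferentiableAt ℝ (y₂ 0) 1 := by fun_prop (disch := simpa using hNω₂)
    show deriv (fun t => f₂ 0 t) 1 = _
    rw [hf₂, (hu.mul_of_left_eq_zero hy₂ (by norm_num)).deriv]
    simp [y₂]
  have hJ00_neg : J 0 0 < 0 := hJ00 ▸ h1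
  have hJ11_neg : J 1 1 < 0 := hJ11 ▸ neg_of_mul_pos_right h2 h1.le
  refine ⟨hJ01, hJ00_neg, hJ11_neg, fun μ hμ => ?_⟩
  have hlower : (J.map Complex.ofReal).IsLowerTriangular :=
    Matrix.isLowerTriangular_of_fin_two (by simp [hJ01])
  obtain ⟨i, rfl⟩ := Matrix.exists_eq_diag_of_isRoot_charpoly hlower hμ
  fin_cases i
  exacts [⟨J 0 0, hJ00_neg, rfl⟩, ⟨J 1 1, hJ11_neg, rfl⟩]

/-- (Lemma 1, part 1) Stability criterion at the boundary rest point `(0,1)`: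
if `(a-b)/(Nω₂) - p(ω₁-ω₂) < 0` and
`((a-b)/(Nω₂) - p(ω₁-ω₂)) * (pω₂ - b/(Nω₂)) > 0`, then the Jacobian `J(0,1)` of
the replicator dynamics is triangular (`J₁₂ = 0`) with both of its diagonal entries
strictly negative, and both of its eigenvalues (the roots of its characteristic
polynomial over `ℂ`) are real and strictly negative. -/
theorem boundary_rest_point_stability_criterion (N p ω₁ ω₂ a b : ℝ)
    (hN : 0 < N) (hp : 0 < p) (hω₁ : 0 < ω₁) (hω₂ : 0 < ω₂)
    (ha : 0 < a) (hb : 0 < b) (hω : ω₁ ≠ ω₂)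
    (h1 : (a - b) / (N * ω₂) - p * (ω₁ - ω₂) < 0)
    (h2 : ((a - b) / (N * ω₂) - p * (ω₁ - ω₂)) * (p * ω₂ - b / (N * ω₂)) > 0) :
    let y₁ : ℝ → ℝ → ℝ := fun x₁ x₂ => a / (N * (ω₁ * x₁ + ω₂ * x₂)) - p * ω₁
    let y₂ : ℝ → ℝ → ℝ := fun x₁ x₂ => b / (N * (ω₁ * x₁ + ω₂ * x₂)) - p * ω₂
    let f₁ : ℝ → ℝ → ℝ := fun x₁ x₂ =>
      x₁ * (y₁ x₁ x₂ - (x₁ * y₁ x₁ x₂ + x₂ * y₂ x₁ x₂))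
    let f₂ : ℝ → ℝ → ℝ := fun x₁ x₂ =>
      x₂ * (y₂ x₁ x₂ - (x₁ * y₁ x₁ x₂ + x₂ * y₂ x₁ x₂))
    let J : Matrix (Fin 2) (Fin 2) ℝ :=
      !![deriv (fun t => f₁ t 1) 0, deriv (fun t => f₁ 0 t) 1;
         deriv (fun t => f₂ t 1) 0, deriv (fun t => f₂ 0 t) 1]
    J 0 1 = 0 ∧ J 0 0 < 0 ∧ J 1 1 < 0 ∧
    (∀ μ : ℂ, (J.map (Complex.ofReal)).charpoly.IsRoot μ →
      ∃ r : ℝ, r < 0 ∧ μ = (r : ℂ)) :=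
  boundary_rest_point_stability_criterion_general N p ω₁ ω₂ a b hN hω₂ h1 h2
end

section
/- Jacobian of the replicator dynamics at the interior rest point: assume a ≠ b, let x̂ := (a − b)/(Np(ω₁ − ω₂)²) − ω₂/(ω₁ − ω₂), assume 0 < x̂ < 1, and set c := a − b + Npω₂(ω₂ − ω₁). Then the Jacobian J of (f₁,f₂), evaluated at (x̂, 1 − x̂), satisfies J₁₁ = c·(a(ω₁ + ω₂) + ω₁(−2b + Npω₁(ω₂ − ω₁))) / (N(a − b)(ω₁ − ω₂)²) and det J = p·c·(aω₂ − bω₁)·(a − b + Npω₁(ω₂ − ω₁)) / (N(a − b)²(ω₁ − ω₂)). -/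
/-!
At an interior rest point `x₁ + x₂ = 1` both payoffs equal the mean payoff `y`, so in
`∂ⱼ fᵢ = δᵢⱼ (yᵢ - ȳ) + xᵢ (∂ⱼ yᵢ - ∂ⱼ ȳ)` the first term vanishes and, since
`∂ⱼ ȳ = y + x₁ ∂ⱼ y₁ + x₂ ∂ⱼ y₂`, `J₁ⱼ = x₁ (x₂ (∂ⱼ y₁ - ∂ⱼ y₂) - y)` and
`J₂ⱼ = x₂ (x₁ (∂ⱼ y₂ - ∂ⱼ y₁) - y)`.
For the pool payoffs `∂ⱼ y₁ - ∂ⱼ y₂ = -ωⱼ κ` with `κ = N (a - b) / (N (ω₁ x₁ + ω₂ x₂))²`, and at the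
rest point `N (ω₁ x₁ + ω₂ x₂) = (a - b) / (p (ω₁ - ω₂))`; what is left is rational arithmetic.
-/

section Replicator

variable {y₁ y₂ : ℝ → ℝ → ℝ} {x₁ x₂ y d₁ d₂ e₁ e₂ : ℝ}

def meanPayoff (y₁ y₂ : ℝ → ℝ → ℝ) (x₁ x₂ : ℝ) : ℝ := x₁ * y₁ x₁ x₂ + x₂ * y₂ x₁ x₂

theorem meanPayoff_eq_of_eq (hx : x₁ + x₂ = 1) (hy₁ : y₁ x₁ x₂ = y) (hy₂ : y₂ x₁ x₂ = y) :
    meanPayoff y₁ y₂ x₁ x₂ = y := by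
  rw [meanPayoff, hy₁, hy₂]
  linear_combination y * hx

theorem hasDerivAt_meanPayoff_fst (h₁ : HasDerivAt (fun t => y₁ t x₂) d₁ x₁)
    (h₂ : HasDerivAt (fun t => y₂ t x₂) d₂ x₁) :
    HasDerivAt (fun t => meanPayoff y₁ y₂ t x₂) (y₁ x₁ x₂ + x₁ * d₁ + x₂ * d₂) x₁ :=
  (((hasDerivAt_id' x₁).fun_mul h₁).fun_add (h₂.const_mul x₂)).congr_deriv (by ring)

theorem hasDerivAt_meanPayoff_snd (h₁ : HasDerivAt (fun t => y₁ x₁ t) e₁ x₂)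
    (h₂ : HasDerivAt (fun t => y₂ x₁ t) e₂ x₂) :
    HasDerivAt (fun t => meanPayoff y₁ y₂ x₁ t) (x₁ * e₁ + y₂ x₁ x₂ + x₂ * e₂) x₂ :=
  ((h₁.const_mul x₁).fun_add ((hasDerivAt_id' x₂).fun_mul h₂)).congr_deriv (by ring)

theorem HasDerivAt.id_mul_sub_of_eq {u v : ℝ → ℝ} {u' v' t : ℝ} (hu : HasDerivAt u u' t)
    (hv : HasDerivAt v v' t) (h : u t = v t) :
    HasDerivAt (fun s => s * (u s - v s)) (t * (u' - v')) t :=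
  ((hasDerivAt_id' t).fun_mul (hu.fun_sub hv)).congr_deriv
    (by rw [h, sub_self, mul_zero, zero_add])

theorem hasDerivAt_replicator₁_fst (hx : x₁ + x₂ = 1) (hy₁ : y₁ x₁ x₂ = y) (hy₂ : y₂ x₁ x₂ = y)
    (h₁ : HasDerivAt (fun t => y₁ t x₂) d₁ x₁)
    (h₂ : HasDerivAt (fun t => y₂ t x₂) d₂ x₁) :
    HasDerivAt (fun t => t * (y₁ t x₂ - meanPayoff y₁ y₂ t x₂)) (x₁ * (x₂ * (d₁ - d₂) - y)) x₁ := by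
  refine (h₁.id_mul_sub_of_eq (hasDerivAt_meanPayoff_fst h₁ h₂)
    (by rw [meanPayoff_eq_of_eq hx hy₁ hy₂, hy₁])).congr_deriv ?_
  rw [hy₁]
  linear_combination -(x₁ * d₁) * hx

theorem hasDerivAt_replicator₁_snd (hx : x₁ + x₂ = 1) (hy₂ : y₂ x₁ x₂ = y)
    (h₁ : HasDerivAt (fun t => y₁ x₁ t) e₁ x₂)
    (h₂ : HasDerivAt (fun t => y₂ x₁ t) e₂ x₂) :
    HasDerivAt (fun t => x₁ * (y₁ x₁ t - meanPayoff y₁ y₂ x₁ t))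
      (x₁ * (x₂ * (e₁ - e₂) - y)) x₂ := by
  refine ((h₁.fun_sub (hasDerivAt_meanPayoff_snd h₁ h₂)).const_mul x₁).congr_deriv ?_
  rw [hy₂]
  linear_combination -(x₁ * e₁) * hx

theorem hasDerivAt_replicator₂_fst (hx : x₁ + x₂ = 1) (hy₁ : y₁ x₁ x₂ = y)
    (h₁ : HasDerivAt (fun t => y₁ t x₂) d₁ x₁)
    (h₂ : HasDerivAt (fun t => y₂ t x₂) d₂ x₁) :
    HasDerivAt (fun t => x₂ * (y₂ t x₂ - meanPayoff y₁ y₂ t x₂))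
      (x₂ * (x₁ * (d₂ - d₁) - y)) x₁ := by
  refine ((h₂.fun_sub (hasDerivAt_meanPayoff_fst h₁ h₂)).const_mul x₂).congr_deriv ?_
  rw [hy₁]
  linear_combination -(x₂ * d₂) * hx

theorem hasDerivAt_replicator₂_snd (hx : x₁ + x₂ = 1) (hy₁ : y₁ x₁ x₂ = y) (hy₂ : y₂ x₁ x₂ = y)
    (h₁ : HasDerivAt (fun t => y₁ x₁ t) e₁ x₂)
    (h₂ : HasDerivAt (fun t => y₂ x₁ t) e₂ x₂) :
    HasDerivAt (fun t => t * (y₂ x₁ t - meanPayoff y₁ y₂ x₁ t)) (x₂ * (x₁ * (e₂ - e₁) - y)) x₂ := by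
  refine (h₂.id_mul_sub_of_eq (hasDerivAt_meanPayoff_snd h₁ h₂)
    (by rw [meanPayoff_eq_of_eq hx hy₁ hy₂, hy₂])).congr_deriv ?_
  rw [hy₂]
  linear_combination -(x₂ * e₂) * hx

end Replicator

section PoolPayoff

variable {N p ω₁ ω₂ a b r q x₁ x₂ : ℝ}

theorem hasDerivAt_poolPayoff_fst (hD : N * (ω₁ * x₁ + ω₂ * x₂) ≠ 0) :
    HasDerivAt (fun t => r / (N * (ω₁ * t + ω₂ * x₂)) - q)
      (-(r * N * ω₁) / (N * (ω₁ * x₁ + ω₂ * x₂)) ^ 2) x₁ := by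
  have hlin : HasDerivAt (fun t => N * (ω₁ * t + ω₂ * x₂)) (N * ω₁) x₁ :=
    (((hasDerivAt_id' x₁).const_mul ω₁).add_const _).const_mul N |>.congr_deriv (by ring)
  exact (((hasDerivAt_const x₁ r).fun_div hlin hD).sub_const q).congr_deriv (by ring)

theorem hasDerivAt_poolPayoff_snd (hD : N * (ω₁ * x₁ + ω₂ * x₂) ≠ 0) :
    HasDerivAt (fun t => r / (N * (ω₁ * x₁ + ω₂ * t)) - q)
      (-(r * N * ω₂) / (N * (ω₁ * x₁ + ω₂ * x₂)) ^ 2) x₂ := by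
  have hlin : HasDerivAt (fun t => N * (ω₁ * x₁ + ω₂ * t)) (N * ω₂) x₂ :=
    (((hasDerivAt_id' x₂).const_mul ω₂).const_add _).const_mul N |>.congr_deriv (by ring)
  exact (((hasDerivAt_const x₂ r).fun_div hlin hD).sub_const q).congr_deriv (by ring)

theorem weightedTotal_eq_of_restPoint (hN : N ≠ 0) (hp : p ≠ 0) (hω : ω₁ ≠ ω₂)
    (hx : x₁ = (a - b) / (N * p * (ω₁ - ω₂) ^ 2) - ω₂ / (ω₁ - ω₂)) :
    N * (ω₁ * x₁ + ω₂ * (1 - x₁)) = (a - b) / (p * (ω₁ - ω₂)) := by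
  have : ω₁ - ω₂ ≠ 0 := sub_ne_zero.2 hω
  rw [hx]
  field_simp
  ring

theorem poolPayoffs_eq_of_weightedTotal (hp : p ≠ 0) (hω : ω₁ ≠ ω₂) (hab : a ≠ b)
    (hD : N * (ω₁ * x₁ + ω₂ * x₂) = (a - b) / (p * (ω₁ - ω₂))) :
    a / (N * (ω₁ * x₁ + ω₂ * x₂)) - p * ω₁ = p * (b * ω₁ - a * ω₂) / (a - b) ∧
      b / (N * (ω₁ * x₁ + ω₂ * x₂)) - p * ω₂ = p * (b * ω₁ - a * ω₂) / (a - b) := by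
  have : ω₁ - ω₂ ≠ 0 := sub_ne_zero.2 hω
  have : a - b ≠ 0 := sub_ne_zero.2 hab
  rw [hD]
  constructor <;> field_simp <;> ring

end PoolPayoff

theorem jacobian_at_interior_rest_point_general (N p ω₁ ω₂ a b : ℝ)
    (hN : 0 < N) (hp : 0 < p)
    (hω : ω₁ ≠ ω₂) (hab : a ≠ b)
    (xstar : ℝ) (hxstar : xstar = (a - b) / (N * p * (ω₁ - ω₂) ^ 2) - ω₂ / (ω₁ - ω₂))
    (c : ℝ) (hc : c = a - b + N * p * ω₂ * (ω₂ - ω₁)) :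
    let y₁ : ℝ → ℝ → ℝ := fun x₁ x₂ => a / (N * (ω₁ * x₁ + ω₂ * x₂)) - p * ω₁
    let y₂ : ℝ → ℝ → ℝ := fun x₁ x₂ => b / (N * (ω₁ * x₁ + ω₂ * x₂)) - p * ω₂
    let f₁ : ℝ → ℝ → ℝ := fun x₁ x₂ =>
      x₁ * (y₁ x₁ x₂ - (x₁ * y₁ x₁ x₂ + x₂ * y₂ x₁ x₂))
    let f₂ : ℝ → ℝ → ℝ := fun x₁ x₂ =>
      x₂ * (y₂ x₁ x₂ - (x₁ * y₁ x₁ x₂ + x₂ * y₂ x₁ x₂))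
    let J₁₁ : ℝ := deriv (fun t => f₁ t (1 - xstar)) xstar
    let J₁₂ : ℝ := deriv (fun t => f₁ xstar t) (1 - xstar)
    let J₂₁ : ℝ := deriv (fun t => f₂ t (1 - xstar)) xstar
    let J₂₂ : ℝ := deriv (fun t => f₂ xstar t) (1 - xstar)
    J₁₁ = c * (a * (ω₁ + ω₂) + ω₁ * (-2 * b + N * p * ω₁ * (ω₂ - ω₁)))
            / (N * (a - b) * (ω₁ - ω₂) ^ 2) ∧
    J₁₁ * J₂₂ - J₁₂ * J₂₁
      = p * c * (a * ω₂ - b * ω₁) * (a - b + N * p * ω₁ * (ω₂ - ω₁))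
          / (N * (a - b) ^ 2 * (ω₁ - ω₂)) := by
  intro y₁ y₂ f₁ f₂ J₁₁ J₁₂ J₂₁ J₂₂
  have hD := weightedTotal_eq_of_restPoint hN.ne' hp.ne' hω hxstar
  have hD₀ : N * (ω₁ * xstar + ω₂ * (1 - xstar)) ≠ 0 := by
    rw [hD]
    exact div_ne_zero (sub_ne_zero.2 hab) (mul_ne_zero hp.ne' (sub_ne_zero.2 hω))
  obtain ⟨hy₁, hy₂⟩ := poolPayoffs_eq_of_weightedTotal hp.ne' hω hab hD
  have hx : xstar + (1 - xstar) = 1 := add_sub_cancel _ _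
  have e₁₁ : J₁₁ = _ := (hasDerivAt_replicator₁_fst (y₁ := y₁) (y₂ := y₂) hx hy₁ hy₂
    (hasDerivAt_poolPayoff_fst hD₀) (hasDerivAt_poolPayoff_fst hD₀)).deriv
  have e₁₂ : J₁₂ = _ := (hasDerivAt_replicator₁_snd (y₁ := y₁) (y₂ := y₂) hx hy₂
    (hasDerivAt_poolPayoff_snd hD₀) (hasDerivAt_poolPayoff_snd hD₀)).deriv
  have e₂₁ : J₂₁ = _ := (hasDerivAt_replicator₂_fst (y₁ := y₁) (y₂ := y₂) hx hy₁
    (hasDerivAt_poolPayoff_fst hD₀) (hasDerivAt_poolPayoff_fst hD₀)).deriv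
  have e₂₂ : J₂₂ = _ := (hasDerivAt_replicator₂_snd (y₁ := y₁) (y₂ := y₂) hx hy₁ hy₂
    (hasDerivAt_poolPayoff_snd hD₀) (hasDerivAt_poolPayoff_snd hD₀)).deriv
  have : ω₁ - ω₂ ≠ 0 := sub_ne_zero.2 hω
  have : a - b ≠ 0 := sub_ne_zero.2 hab
  rw [e₁₁, e₁₂, e₂₁, e₂₂, hD]
  subst hc hxstar
  constructor <;> field_simp <;> ring

/-- Jacobian of the two-pool replicator dynamics at the interior rest point
`(xstar, 1-xstar)` with `xstar = (a-b)/(Np(ω₁-ω₂)²) - ω₂/(ω₁-ω₂)` and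
`c = a - b + Npω₂(ω₂-ω₁)`:
`J₁₁ = c(a(ω₁+ω₂) + ω₁(-2b + Npω₁(ω₂-ω₁))) / (N(a-b)(ω₁-ω₂)²)` and
`det J = p c (aω₂ - bω₁)(a - b + Npω₁(ω₂-ω₁)) / (N(a-b)²(ω₁-ω₂))`. -/
theorem jacobian_at_interior_rest_point (N p ω₁ ω₂ a b : ℝ)
    (hN : 0 < N) (hp : 0 < p) (hω₁ : 0 < ω₁) (hω₂ : 0 < ω₂)
    (ha : 0 < a) (hb : 0 < b) (hω : ω₁ ≠ ω₂) (hab : a ≠ b)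
    (xstar : ℝ) (hxstar : xstar = (a - b) / (N * p * (ω₁ - ω₂) ^ 2) - ω₂ / (ω₁ - ω₂))
    (hxstar0 : 0 < xstar) (hxstar1 : xstar < 1)
    (c : ℝ) (hc : c = a - b + N * p * ω₂ * (ω₂ - ω₁)) :
    let y₁ : ℝ → ℝ → ℝ := fun x₁ x₂ => a / (N * (ω₁ * x₁ + ω₂ * x₂)) - p * ω₁
    let y₂ : ℝ → ℝ → ℝ := fun x₁ x₂ => b / (N * (ω₁ * x₁ + ω₂ * x₂)) - p * ω₂
    let f₁ : ℝ → ℝ → ℝ := fun x₁ x₂ =>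
      x₁ * (y₁ x₁ x₂ - (x₁ * y₁ x₁ x₂ + x₂ * y₂ x₁ x₂))
    let f₂ : ℝ → ℝ → ℝ := fun x₁ x₂ =>
      x₂ * (y₂ x₁ x₂ - (x₁ * y₁ x₁ x₂ + x₂ * y₂ x₁ x₂))
    let J₁₁ : ℝ := deriv (fun t => f₁ t (1 - xstar)) xstar
    let J₁₂ : ℝ := deriv (fun t => f₁ xstar t) (1 - xstar)
    let J₂₁ : ℝ := deriv (fun t => f₂ t (1 - xstar)) xstar
    let J₂₂ : ℝ := deriv (fun t => f₂ xstar t) (1 - xstar)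
    J₁₁ = c * (a * (ω₁ + ω₂) + ω₁ * (-2 * b + N * p * ω₁ * (ω₂ - ω₁)))
            / (N * (a - b) * (ω₁ - ω₂) ^ 2) ∧
    J₁₁ * J₂₂ - J₁₂ * J₂₁
      = p * c * (a * ω₂ - b * ω₁) * (a - b + N * p * ω₁ * (ω₂ - ω₁))
          / (N * (a - b) ^ 2 * (ω₁ - ω₂)) :=
  jacobian_at_interior_rest_point_general N p ω₁ ω₂ a b hN hp hω hab xstar hxstar c hc
end

section
/- (Theorem 2, instability of the boundary rest point (0,1)) With a, b, p, ω₁, ω₂ fixed positive reals and ω₁ ≠ ω₂, there exists N₀ > 0 such that for all N ≥ N₀ the stability criterion fails at the rest point (0,1): it is not the case that both D₁(N) := (a − b)/(Nω₂) − p(ω₁ − ω₂) < 0 and D(N) := ((a − b)/(Nω₂) − p(ω₁ − ω₂))·(pω₂ − b/(Nω₂)) > 0 (these being the leading principal minor and determinant of the Jacobian of the replicator dynamics at (0,1)). -/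
/-!
At `(0,1)` the diagonal entries of the Jacobian are `D₁ = x - p(ω₁ - ω₂)` and `pω₂ - y` with
`x = (a - b)/(Nω₂)` and `y = b/(Nω₂)`, and both `x` and `y` tend to `0` as `N → ∞`. If `ω₁ < ω₂`,
then `D₁` is eventually positive; if `ω₁ > ω₂`, then `pω₂ - y` is eventually positive, so `D₁ < 0`
forces `D < 0`. Either way the criterion `D₁ < 0 ∧ D > 0` fails.
-/

open Filter Topology

lemma not_neg_and_mul_pos_of_abs_lt {x y d e : ℝ} (hx : |x| < |d|) (hy : y < e) :
    ¬(x - d < 0 ∧ (x - d) * (e - y) > 0) := by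
  rintro ⟨hneg, hpos⟩
  rcases lt_or_ge d 0 with hd | hd
  · have := neg_abs_le x
    rw [abs_of_neg hd] at hx
    linarith
  · nlinarith

lemma tendsto_const_div_mul_const_atTop {ω : ℝ} (hω : 0 < ω) (c : ℝ) :
    Tendsto (fun N : ℝ => c / (N * ω)) atTop (𝓝 0) :=
  tendsto_const_nhds.div_atTop (tendsto_id.atTop_mul_const hω)

lemma exists_pos_forall_ge_of_eventually_atTop {P : ℝ → Prop} (h : ∀ᶠ N in atTop, P N) :
    ∃ N₀ : ℝ, 0 < N₀ ∧ ∀ N : ℝ, N₀ ≤ N → P N := by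
  obtain ⟨N₁, hN₁⟩ := eventually_atTop.1 h
  exact ⟨max N₁ 1, by positivity, fun N hN => hN₁ N (le_of_max_le_left hN)⟩

theorem boundary_rest_point_01_unstable_large_population_general (p ω₁ ω₂ a b : ℝ)
    (hp : 0 < p) (hω₂ : 0 < ω₂) (hω : ω₁ ≠ ω₂) :
    ∃ N₀ : ℝ, 0 < N₀ ∧ ∀ N : ℝ, N₀ ≤ N →
      ¬((a - b) / (N * ω₂) - p * (ω₁ - ω₂) < 0 ∧
        ((a - b) / (N * ω₂) - p * (ω₁ - ω₂)) * (p * ω₂ - b / (N * ω₂)) > 0) := by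
  have hd : 0 < |p * (ω₁ - ω₂)| := abs_pos.2 (mul_ne_zero hp.ne' (sub_ne_zero.2 hω))
  have hx : ∀ᶠ N in atTop, |(a - b) / (N * ω₂)| < |p * (ω₁ - ω₂)| := by
    have := (tendsto_const_div_mul_const_atTop hω₂ (a - b)).abs
    rw [abs_zero] at this
    exact this.eventually (gt_mem_nhds hd)
  have hy : ∀ᶠ N in atTop, b / (N * ω₂) < p * ω₂ :=
    (tendsto_const_div_mul_const_atTop hω₂ b).eventually (gt_mem_nhds (by positivity))
  exact exists_pos_forall_ge_of_eventually_atTop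
    ((hx.and hy).mono fun N hN => not_neg_and_mul_pos_of_abs_lt hN.1 hN.2)

/-- (Theorem 2, instability of the boundary rest point `(0,1)`) For all sufficiently
large population sizes `N`, the stability criterion fails at `(0,1)`: it is not the
case that both `D₁(N) = (a-b)/(Nω₂) - p(ω₁-ω₂) < 0` and
`D(N) = ((a-b)/(Nω₂) - p(ω₁-ω₂))(pω₂ - b/(Nω₂)) > 0`. -/
theorem boundary_rest_point_01_unstable_large_population (p ω₁ ω₂ a b : ℝ)
    (hp : 0 < p) (hω₁ : 0 < ω₁) (hω₂ : 0 < ω₂)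
    (ha : 0 < a) (hb : 0 < b) (hω : ω₁ ≠ ω₂) :
    ∃ N₀ : ℝ, 0 < N₀ ∧ ∀ N : ℝ, N₀ ≤ N →
      ¬((a - b) / (N * ω₂) - p * (ω₁ - ω₂) < 0 ∧
        ((a - b) / (N * ω₂) - p * (ω₁ - ω₂)) * (p * ω₂ - b / (N * ω₂)) > 0) :=
  boundary_rest_point_01_unstable_large_population_general p ω₁ ω₂ a b hp hω₂ hω
end

section
/- (Theorem 2, evolutionary stability of the interior rest point) With a, b, p, ω₁, ω₂ fixed positive reals, ω₁ ≠ ω₂, and c(N) := a − b + Npω₂(ω₂ − ω₁): if a − b < 0 and (bω₁ − aω₂)(ω₂ − ω₁) > 0, then there exists N₀ > 0 such that for all N ≥ N₀ the stability criterion holds at the interior rest point, namely D₁(N) := c(N)·(a(ω₁ + ω₂) + ω₁(−2b + Npω₁(ω₂ − ω₁))) / (N(a − b)(ω₁ − ω₂)²) < 0 and D(N) := p·c(N)·(aω₂ − bω₁)·(a − b + Npω₁(ω₂ − ω₁)) / (N(a − b)²(ω₁ − ω₂)) > 0 (these being the leading principal minor and determinant of the Jacobian of the replicator dynamics at the interior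 rest point). -/
/-!
The three factors of the minors that depend on `N`, `a - b + N p ω₂ (ω₂ - ω₁)`,
`a(ω₁ + ω₂) - 2bω₁ + N p ω₁² (ω₂ - ω₁)` and `a - b + N p ω₁ (ω₂ - ω₁)`, are affine in `N` with
slope a positive multiple of `ω₂ - ω₁`. For large `N` they all take the sign of `ω₂ - ω₁`, so the
product of any two of them is positive. The remaining signs are fixed:
`N (a - b) (ω₁ - ω₂)² < 0` because `a < b`, and `(aω₂ - bω₁) / (ω₁ - ω₂) > 0` because its
numerator and denominator multiply to `(bω₁ - aω₂)(ω₂ - ω₁) > 0`.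
-/

open Filter

lemma eventually_pos_mul_add_mul_mul {𝕜 : Type*} [Field 𝕜] [LinearOrder 𝕜] [IsStrictOrderedRing 𝕜]
    {κ s : 𝕜} (hκ : 0 < κ) (hs : s ≠ 0) (α : 𝕜) :
    ∀ᶠ N in atTop, 0 < s * (α + N * κ * s) := by
  have hκs : 0 < κ * s ^ 2 := by positivity
  filter_upwards [eventually_gt_atTop (-(s * α) / (κ * s ^ 2))] with N hN
  rw [div_lt_iff₀ hκs] at hN
  linarith

lemma mul_pos_of_mul_pos_of_mul_pos {R : Type*} [CommRing R] [LinearOrder R] [IsStrictOrderedRing R]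
    {s x y : R} (hx : 0 < s * x) (hy : 0 < s * y) : 0 < x * y := by
  have hsq : 0 < s ^ 2 * (x * y) := by
    calc 0 < s * x * (s * y) := mul_pos hx hy
      _ = s ^ 2 * (x * y) := by ring
  exact pos_of_mul_pos_right hsq (sq_nonneg s)

theorem interior_rest_point_ESS_large_population_general (p ω₁ ω₂ a b : ℝ)
    (hp : 0 < p) (hω₁ : 0 < ω₁) (hω₂ : 0 < ω₂)
    (hab : a - b < 0) (hcond : (b * ω₁ - a * ω₂) * (ω₂ - ω₁) > 0) :
    ∃ N₀ : ℝ, 0 < N₀ ∧ ∀ N : ℝ, N₀ ≤ N →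
      ((a - b + N * p * ω₂ * (ω₂ - ω₁))
          * (a * (ω₁ + ω₂) + ω₁ * (-2 * b + N * p * ω₁ * (ω₂ - ω₁)))
        / (N * (a - b) * (ω₁ - ω₂) ^ 2) < 0 ∧
       p * (a - b + N * p * ω₂ * (ω₂ - ω₁)) * (a * ω₂ - b * ω₁)
          * (a - b + N * p * ω₁ * (ω₂ - ω₁))
        / (N * (a - b) ^ 2 * (ω₁ - ω₂)) > 0) := by
  have hs : ω₂ - ω₁ ≠ 0 := right_ne_zero_of_mul hcond.ne'
  have hc := eventually_pos_mul_add_mul_mul (mul_pos hp hω₂) hs (a - b)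
  have hn := eventually_pos_mul_add_mul_mul (mul_pos hp (pow_pos hω₁ 2)) hs
    (a * (ω₁ + ω₂) - 2 * b * ω₁)
  have he := eventually_pos_mul_add_mul_mul (mul_pos hp hω₁) hs (a - b)
  obtain ⟨N₀, hN₀⟩ := (hc.and (hn.and (he.and (eventually_gt_atTop 0)))).exists_forall_of_atTop
  refine ⟨max N₀ 1, by positivity, fun N hN => ?_⟩
  obtain ⟨hcN, hnN, heN, hNpos⟩ := hN₀ N (le_of_max_le_left hN)
  have hquot : 0 < (a * ω₂ - b * ω₁) / (ω₁ - ω₂) :=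
    div_pos_iff.mpr (mul_pos_iff.mp (by linarith))
  constructor
  · refine div_neg_of_pos_of_neg
      (mul_pos_of_mul_pos_of_mul_pos (s := ω₂ - ω₁) (by linarith) (by linarith)) ?_
    exact mul_neg_of_neg_of_pos (mul_neg_of_pos_of_neg hNpos hab)
      (sub_sq_comm ω₁ ω₂ ▸ sq_pos_of_ne_zero hs)
  · have hce : 0 < (a - b + N * p * ω₂ * (ω₂ - ω₁)) * (a - b + N * p * ω₁ * (ω₂ - ω₁)) :=
      mul_pos_of_mul_pos_of_mul_pos (s := ω₂ - ω₁) (by linarith) (by linarith)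
    calc 0 < p * ((a - b + N * p * ω₂ * (ω₂ - ω₁)) * (a - b + N * p * ω₁ * (ω₂ - ω₁)))
          / (N * (a - b) ^ 2) * ((a * ω₂ - b * ω₁) / (ω₁ - ω₂)) :=
          mul_pos (div_pos (mul_pos hp hce) (mul_pos hNpos (sq_pos_of_ne_zero hab.ne))) hquot
      _ = _ := by rw [div_mul_div_comm]; congr 1; ring

/-- (Theorem 2, evolutionary stability of the interior rest point) If `a - b < 0` and
`(bω₁ - aω₂)(ω₂ - ω₁) > 0`, then for all sufficiently large population sizes `N`
the stability criterion holds at the interior rest point: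
`D₁(N) = c(N)(a(ω₁+ω₂) + ω₁(-2b + Npω₁(ω₂-ω₁))) / (N(a-b)(ω₁-ω₂)²) < 0` and
`D(N) = p c(N)(aω₂ - bω₁)(a - b + Npω₁(ω₂-ω₁)) / (N(a-b)²(ω₁-ω₂)) > 0`,
where `c(N) = a - b + Npω₂(ω₂-ω₁)`. -/
theorem interior_rest_point_ESS_large_population (p ω₁ ω₂ a b : ℝ)
    (hp : 0 < p) (hω₁ : 0 < ω₁) (hω₂ : 0 < ω₂)
    (ha : 0 < a) (hb : 0 < b) (hω : ω₁ ≠ ω₂)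
    (hab : a - b < 0) (hcond : (b * ω₁ - a * ω₂) * (ω₂ - ω₁) > 0) :
    ∃ N₀ : ℝ, 0 < N₀ ∧ ∀ N : ℝ, N₀ ≤ N →
      ((a - b + N * p * ω₂ * (ω₂ - ω₁))
          * (a * (ω₁ + ω₂) + ω₁ * (-2 * b + N * p * ω₁ * (ω₂ - ω₁)))
        / (N * (a - b) * (ω₁ - ω₂) ^ 2) < 0 ∧
       p * (a - b + N * p * ω₂ * (ω₂ - ω₁)) * (a * ω₂ - b * ω₁)
          * (a - b + N * p * ω₁ * (ω₂ - ω₁))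
        / (N * (a - b) ^ 2 * (ω₁ - ω₂)) > 0) :=
  interior_rest_point_ESS_large_population_general p ω₁ ω₂ a b hp hω₁ hω₂ hab hcond
end
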